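/- Evolution of the discrete kinetic energy (semi-discrete CPIC in 3D): let w_p ≥ 0, let (x_p(t), v_p(t)) ∈ ℝ³ × ℝ³ be differentiable trajectories satisfying v̇_p = E_p + v_p × B_p − U_p, where × is the vector cross product in ℝ³, U_p = Σ_q w_q ψ(x_p − x_q) A(v_p − v_q) b_{p,q} with ψ even and b_{q,p} = −b_{p,q}, and the electric field at particle p is interpolated from mesh values Ẽ_h ∈ ℝ³ on finitely many mesh points x_h by E_p = Σ_h Ẽ_h ψ(x_p − x_h) η with η > 0 (B_p ∈ ℝ³ arbitrary). Then d/dt (1/2) Σ_p w_p ‖v_p‖² = Σ_h (J̃_h · Ẽ_h) η, where J̃_h = Σ_p w_p v_p ψ(x_h − x_p) is the regularised current at mesh point x_h. -/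

import Mathlib

open Matrix
open scoped Classical

/-- The Landau collision kernel `A(z) = C ‖z‖^(γ+2) (I − z zᵀ/‖z‖²)` for `z ≠ 0`,
with the convention `A(0) = 0`. -/
noncomputable def landauA (d : ℕ) (C γ : ℝ) (z : Fin d → ℝ) :
    Matrix (Fin d) (Fin d) ℝ :=
  if z = 0 then 0
  else (C * Real.sqrt (z ⬝ᵥ z) ^ (γ + 2)) •
    (1 - (z ⬝ᵥ z)⁻¹ • Matrix.vecMulVec z z)

/-!
Differentiating, `d/dt (1/2) Σ_p w_p ‖v_p‖² = Σ_p w_p v̇_p · v_p`. The magnetic term drops out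
since `v × B ⊥ v`. The collision term drops out because, symmetrising the double sum over `(p, q)`
with `ψ` even, `A` even and `b` antisymmetric, it becomes a multiple of
`A(v_p − v_q) b_{p,q} · (v_p − v_q)`, which vanishes since `A(z)` is symmetric and kills `z`.
The electric term is turned into `Σ_h (J̃_h · Ẽ_h) η` by exchanging the sums over particles and
mesh points, using once more that `ψ` is even.
-/

section LandauKernel

variable (d : ℕ) (C γ : ℝ)

lemma landauA_neg (z : Fin d → ℝ) : landauA d C γ (-z) = landauA d C γ z := by
  simp only [landauA, neg_eq_zero, neg_dotProduct, dotProduct_neg, neg_neg, neg_vecMulVec,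
    vecMulVec_neg]

lemma landauA_transpose (z : Fin d → ℝ) : (landauA d C γ z)ᵀ = landauA d C γ z := by
  unfold landauA
  split_ifs
  · exact transpose_zero
  · rw [transpose_smul, transpose_sub, transpose_one, transpose_smul, transpose_vecMulVec]

lemma landauA_mulVec_self (z : Fin d → ℝ) : landauA d C γ z *ᵥ z = 0 := by
  unfold landauA
  split_ifs with hz
  · exact zero_mulVec z
  · have hzz : z ⬝ᵥ z ≠ 0 := by simpa [dotProduct_self_eq_zero] using hz
    rw [smul_mulVec, sub_mulVec, one_mulVec, smul_mulVec, vecMulVec_mulVec, op_smul_eq_smul,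
      smul_smul, inv_mul_cancel₀ hzz, one_smul, sub_self, smul_zero]

lemma dotProduct_landauA_mulVec (z u : Fin d → ℝ) : z ⬝ᵥ landauA d C γ z *ᵥ u = 0 := by
  rw [dotProduct_mulVec, ← mulVec_transpose, landauA_transpose, landauA_mulVec_self,
    zero_dotProduct]

end LandauKernel

lemma Finset.sum_sum_eq_zero_of_antisymm {ι M : Type*} [Fintype ι] [AddCommGroup M]
    [IsAddTorsionFree M] {c : ι → ι → M} (hc : ∀ p q, c q p = -c p q) :
    ∑ p, ∑ q, c p q = 0 := by
  rw [← neg_eq_self]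
  calc -∑ p, ∑ q, c p q = ∑ p, ∑ q, c q p := by
        rw [← Finset.sum_neg_distrib]
        exact Finset.sum_congr rfl fun p _ => by
          rw [← Finset.sum_neg_distrib]
          exact Finset.sum_congr rfl fun q _ => (hc p q).symm
    _ = ∑ q, ∑ p, c q p := Finset.sum_comm

lemma HasDerivAt.dotProduct {n : Type*} [Fintype n] {f g : ℝ → n → ℝ} {f' g' : n → ℝ} {t : ℝ}
    (hf : HasDerivAt f f' t) (hg : HasDerivAt g g' t) :
    HasDerivAt (fun s => f s ⬝ᵥ g s) (f' ⬝ᵥ g t + f t ⬝ᵥ g') t := by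
  have hfi := hasDerivAt_pi.1 hf
  have hgi := hasDerivAt_pi.1 hg
  have h := HasDerivAt.fun_sum (u := Finset.univ) fun i _ => (hfi i).fun_mul (hgi i)
  rwa [Finset.sum_add_distrib] at h

lemma hasDerivAt_half_sum_mul_dotProduct_self {ι n : Type*} [Fintype ι] [Fintype n]
    (w : ι → ℝ) {v : ι → ℝ → n → ℝ} {v' : ι → n → ℝ} {t : ℝ}
    (hv : ∀ p, HasDerivAt (v p) (v' p) t) :
    HasDerivAt (fun s => (1 / 2) * ∑ p, w p * (v p s ⬝ᵥ v p s))
      (∑ p, w p * (v' p ⬝ᵥ v p t)) t := by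
  have h := ((HasDerivAt.fun_sum fun p (_ : p ∈ Finset.univ) =>
    ((hv p).dotProduct (hv p)).const_mul (w p)).const_mul (1 / 2 : ℝ))
  refine h.congr_deriv ?_
  rw [Finset.mul_sum]
  refine Finset.sum_congr rfl fun p _ => ?_
  rw [dotProduct_comm (v p t)]
  ring

lemma sum_mul_landau_collision_dotProduct_eq_zero {ι : Type*} [Fintype ι] {d : ℕ} (C γ : ℝ)
    (w : ι → ℝ) (ψ : (Fin d → ℝ) → ℝ) (hψ : ∀ y, ψ (-y) = ψ y) (x v : ι → Fin d → ℝ)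
    (b : ι → ι → Fin d → ℝ) (hb : ∀ p q, b q p = -b p q) :
    ∑ p, w p * ((∑ q, (w q * ψ (x p - x q)) • landauA d C γ (v p - v q) *ᵥ b p q) ⬝ᵥ v p)
      = 0 := by
  set c : ι → ι → ℝ := fun p q =>
    w p * w q * ψ (x p - x q) * (landauA d C γ (v p - v q) *ᵥ b p q ⬝ᵥ v p)
  have hc : ∀ p q, c q p = -c p q := fun p q => by
    have hperp := dotProduct_landauA_mulVec d C γ (v p - v q) (b p q)
    rw [dotProduct_comm, dotProduct_sub] at hperp
    simp only [c]
    rw [← neg_sub (x p), ← neg_sub (v p), hψ, landauA_neg, hb, mulVec_neg, neg_dotProduct]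
    linear_combination (w p * w q * ψ (x p - x q)) * hperp
  calc ∑ p, w p * ((∑ q, (w q * ψ (x p - x q)) • landauA d C γ (v p - v q) *ᵥ b p q) ⬝ᵥ v p)
      = ∑ p, ∑ q, c p q := by
        refine Finset.sum_congr rfl fun p _ => ?_
        simp only [sum_dotProduct, smul_dotProduct, smul_eq_mul, Finset.mul_sum, c]
        exact Finset.sum_congr rfl fun q _ => by ring
    _ = 0 := Finset.sum_sum_eq_zero_of_antisymm hc

lemma sum_mul_interpolated_dotProduct_eq_sum_current_dotProduct {ι κ : Type*} [Fintype ι]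
    [Fintype κ] {d : ℕ} (w : ι → ℝ) (ψ : (Fin d → ℝ) → ℝ) (hψ : ∀ y, ψ (-y) = ψ y)
    (x v : ι → Fin d → ℝ) (xh : κ → Fin d → ℝ) (F : κ → Fin d → ℝ) (η : ℝ) :
    ∑ p, w p * ((∑ h, (ψ (x p - xh h) * η) • F h) ⬝ᵥ v p)
      = ∑ h, ((∑ p, (w p * ψ (xh h - x p)) • v p) ⬝ᵥ F h) * η := by
  simp only [sum_dotProduct, smul_dotProduct, smul_eq_mul, Finset.mul_sum,
    Finset.sum_mul]
  rw [Finset.sum_comm]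
  refine Finset.sum_congr rfl fun h _ => Finset.sum_congr rfl fun p _ => ?_
  rw [← neg_sub (xh h), hψ, dotProduct_comm]
  ring

theorem cpic_kinetic_energy_evolution_general {N M : ℕ} (C γ : ℝ)
    (w : Fin N → ℝ)
    (x : Fin N → ℝ → Fin 3 → ℝ) (v : Fin N → ℝ → Fin 3 → ℝ)
    (ψ : (Fin 3 → ℝ) → ℝ) (hψ : ∀ y, ψ (-y) = ψ y)
    (b : Fin N → Fin N → ℝ → Fin 3 → ℝ) (hb : ∀ p q t, b q p t = -(b p q t))
    (U : Fin N → ℝ → Fin 3 → ℝ)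
    (hU : ∀ p t, U p t = ∑ q : Fin N,
      (w q * ψ (x p t - x q t)) • (landauA 3 C γ (v p t - v q t)).mulVec (b p q t))
    (xh : Fin M → Fin 3 → ℝ) (Emesh : Fin M → ℝ → Fin 3 → ℝ)
    (η : ℝ)
    (E : Fin N → ℝ → Fin 3 → ℝ)
    (hE : ∀ p t, E p t = ∑ h : Fin M, (ψ (x p t - xh h) * η) • Emesh h t)
    (B : Fin N → ℝ → Fin 3 → ℝ)
    (hv : ∀ p t, HasDerivAt (v p)
      (E p t + crossProduct (v p t) (B p t) - U p t) t)
    (J : Fin M → ℝ → Fin 3 → ℝ)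
    (hJ : ∀ h t, J h t = ∑ p : Fin N, (w p * ψ (xh h - x p t)) • v p t)
    (t : ℝ) :
    HasDerivAt (fun s => (1 / 2) * ∑ p : Fin N, w p * (v p s ⬝ᵥ v p s))
      (∑ h : Fin M, (J h t ⬝ᵥ Emesh h t) * η) t := by
  convert hasDerivAt_half_sum_mul_dotProduct_self w fun p => hv p t using 1
  have hmagnetic : ∀ p, w p * ((E p t + v p t ⨯₃ B p t - U p t) ⬝ᵥ v p t)
      = w p * (E p t ⬝ᵥ v p t) - w p * (U p t ⬝ᵥ v p t) := fun p => by
    rw [sub_dotProduct, add_dotProduct, dotProduct_comm (v p t ⨯₃ B p t), dot_self_cross]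
    ring
  have hcollision : ∑ p, w p * (U p t ⬝ᵥ v p t) = 0 := by
    simp only [hU]
    exact sum_mul_landau_collision_dotProduct_eq_zero C γ w ψ hψ (x · t) (v · t) (b · · t)
      (hb · · t)
  rw [Finset.sum_congr rfl fun p _ => hmagnetic p, Finset.sum_sub_distrib, hcollision, sub_zero]
  simp only [hE, hJ]
  exact (sum_mul_interpolated_dotProduct_eq_sum_current_dotProduct w ψ hψ (x · t) (v · t) xh
    (Emesh · t) η).symm

/-- Evolution of the discrete kinetic energy (semi-discrete CPIC in 3D): if the
particle velocities satisfy `v̇_p = E_p + v_p × B_p − U_p`, with `U_p` the discrete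
Landau collision field and `E_p = Σ_h Ẽ_h ψ(x_p − x_h) η` interpolated from mesh
values, then `d/dt (1/2) Σ_p w_p ‖v_p‖² = Σ_h (J̃_h · Ẽ_h) η`, where
`J̃_h = Σ_p w_p v_p ψ(x_h − x_p)` is the regularised current. -/
theorem cpic_kinetic_energy_evolution {N M : ℕ} (C γ : ℝ) (hC : 0 < C)
    (w : Fin N → ℝ) (hw : ∀ p, 0 ≤ w p)
    (x : Fin N → ℝ → Fin 3 → ℝ) (v : Fin N → ℝ → Fin 3 → ℝ)
    (ψ : (Fin 3 → ℝ) → ℝ) (hψ : ∀ y, ψ (-y) = ψ y)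
    (b : Fin N → Fin N → ℝ → Fin 3 → ℝ) (hb : ∀ p q t, b q p t = -(b p q t))
    (U : Fin N → ℝ → Fin 3 → ℝ)
    (hU : ∀ p t, U p t = ∑ q : Fin N,
      (w q * ψ (x p t - x q t)) • (landauA 3 C γ (v p t - v q t)).mulVec (b p q t))
    (xh : Fin M → Fin 3 → ℝ) (Emesh : Fin M → ℝ → Fin 3 → ℝ)
    (η : ℝ) (hη : 0 < η)
    (E : Fin N → ℝ → Fin 3 → ℝ)
    (hE : ∀ p t, E p t = ∑ h : Fin M, (ψ (x p t - xh h) * η) • Emesh h t)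
    (B : Fin N → ℝ → Fin 3 → ℝ)
    (hv : ∀ p t, HasDerivAt (v p)
      (E p t + crossProduct (v p t) (B p t) - U p t) t)
    (J : Fin M → ℝ → Fin 3 → ℝ)
    (hJ : ∀ h t, J h t = ∑ p : Fin N, (w p * ψ (xh h - x p t)) • v p t)
    (t : ℝ) :
    HasDerivAt (fun s => (1 / 2) * ∑ p : Fin N, w p * (v p s ⬝ᵥ v p s))
      (∑ h : Fin M, (J h t ⬝ᵥ Emesh h t) * η) t :=
  cpic_kinetic_energy_evolution_general C γ w x v ψ hψ b hb U hU xh Emesh η E hE B hv J hJ t
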